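/- Let H be a directed m-uniform hypergraph on n vertices. Then the Laplacian hypermatrix L_H = L_H⁺ + L_H⁻ is copositive: L_H x^m ≥ 0 for every x ∈ ℝⁿ with all entries nonnegative. -/

import Mathlib

/-!
Expanding `L_H x^m` edge by edge, the diagonal part contributes `∑_{v ∈ e} x_v^m`. An edge `e`
with `|T_e| = k` is hit by exactly `k! (m-k)!` index tuples of `A_H⁺` (a bijection onto the tail
followed by one onto the head), so the weight `1/((m-k)!(k-1)!)` makes it contribute
`k ∏_{v ∈ e} x_v`; symmetrically `A_H⁻` contributes `(m-k) ∏_{v ∈ e} x_v`. Hence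
`L_H x^m = ∑_e (∑_{v ∈ e} x_v^m - m ∏_{v ∈ e} x_v)`, and every summand is nonnegative for
`x ≥ 0` by AM-GM.
-/

open Finset

/-- `(A x^{m-1})_i` for a real order-`m` dimension-`n` hypermatrix `A`
and a real vector `x`. -/
noncomputable def hmApply {m n : ℕ} (hm : 0 < m) (A : (Fin m → Fin n) → ℝ)
    (x : Fin n → ℝ) (i : Fin n) : ℝ :=
  ∑ f ∈ Finset.univ.filter (fun f : Fin m → Fin n => f ⟨0, hm⟩ = i),
    A f * ∏ j ∈ Finset.univ.filter (fun j : Fin m => j ≠ ⟨0, hm⟩), x (f j)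

/-- `(A x^{m-1})_i` for a real hypermatrix `A` and a complex vector `x`. -/
noncomputable def hmApplyC {m n : ℕ} (hm : 0 < m) (A : (Fin m → Fin n) → ℝ)
    (x : Fin n → ℂ) (i : Fin n) : ℂ :=
  ∑ f ∈ Finset.univ.filter (fun f : Fin m → Fin n => f ⟨0, hm⟩ = i),
    (A f : ℂ) * ∏ j ∈ Finset.univ.filter (fun j : Fin m => j ≠ ⟨0, hm⟩), x (f j)

/-- `A x^m`, the homogeneous form associated with a hypermatrix. -/
noncomputable def formEval {m n : ℕ} (A : (Fin m → Fin n) → ℝ) (x : Fin n → ℝ) : ℝ :=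
  ∑ f : Fin m → Fin n, A f * ∏ j, x (f j)

/-- `lam ∈ ℂ` is an eigenvalue of `A`:  there is a nonzero complex vector `x` with
`(A x^{m-1})_i = lam * x_i^{m-1}` for all `i`. -/
def IsEigenvalue {m n : ℕ} (hm : 0 < m) (A : (Fin m → Fin n) → ℝ) (lam : ℂ) : Prop :=
  ∃ x : Fin n → ℂ, x ≠ 0 ∧ ∀ i, hmApplyC hm A x i = lam * (x i) ^ (m - 1)

/-- `(lam, x)` is an H-eigenpair of `A` (both real). -/
def IsHEigenpair {m n : ℕ} (hm : 0 < m) (A : (Fin m → Fin n) → ℝ)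
    (lam : ℝ) (x : Fin n → ℝ) : Prop :=
  x ≠ 0 ∧ ∀ i, hmApply hm A x i = lam * (x i) ^ (m - 1)

/-- `(lam, x)` is a Z-eigenpair of `A`:  `A x^{m-1} = lam x` and `∑ x_i² = 1`. -/
def IsZEigenpair {m n : ℕ} (hm : 0 < m) (A : (Fin m → Fin n) → ℝ)
    (lam : ℝ) (x : Fin n → ℝ) : Prop :=
  (∀ i, hmApply hm A x i = lam * x i) ∧ ∑ i, (x i) ^ 2 = 1

/-- The spectral radius of `A`: the largest modulus of an eigenvalue. -/
noncomputable def specRad {m n : ℕ} (hm : 0 < m) (A : (Fin m → Fin n) → ℝ) : ℝ :=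
  sSup {r : ℝ | ∃ lam : ℂ, IsEigenvalue hm A lam ∧ r = ‖lam‖}

/-- The largest Z-eigenvalue of `A`. -/
noncomputable def zMax {m n : ℕ} (hm : 0 < m) (A : (Fin m → Fin n) → ℝ) : ℝ :=
  sSup {lam : ℝ | ∃ x : Fin n → ℝ, IsZEigenpair hm A lam x}

/-- `A` is copositive: `A x^m ≥ 0` for every entrywise nonnegative real `x`. -/
def Copositive {m n : ℕ} (A : (Fin m → Fin n) → ℝ) : Prop :=
  ∀ x : Fin n → ℝ, (∀ i, 0 ≤ x i) → 0 ≤ formEval A x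

/-- A directed hypergraph on vertex set `Fin n`: each edge is a pair
(tail, head) of disjoint nonempty vertex sets, and distinct edges have
distinct vertex sets. -/
structure DirHypergraph (n : ℕ) where
  edges : Finset (Finset (Fin n) × Finset (Fin n))
  tail_nonempty : ∀ e ∈ edges, e.1.Nonempty
  head_nonempty : ∀ e ∈ edges, e.2.Nonempty
  tail_head_disjoint : ∀ e ∈ edges, Disjoint e.1 e.2
  union_injective : ∀ e ∈ edges, ∀ e' ∈ edges, e.1 ∪ e.2 = e'.1 ∪ e'.2 → e = e'

namespace DirHypergraph

variable {n : ℕ}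

/-- `H` is `m`-uniform. -/
def IsUniform (H : DirHypergraph n) (m : ℕ) : Prop :=
  ∀ e ∈ H.edges, (e.1 ∪ e.2).card = m

/-- `H` is non-uniform: it has two edges of different cardinalities. -/
def NonUniform (H : DirHypergraph n) : Prop :=
  ∃ e ∈ H.edges, ∃ e' ∈ H.edges, (e.1 ∪ e.2).card ≠ (e'.1 ∪ e'.2).card

/-- `m = m.c.e.(H)`, the maximum cardinality of an edge (the rank of `H`). -/
def mce (H : DirHypergraph n) (m : ℕ) : Prop :=
  (∀ e ∈ H.edges, (e.1 ∪ e.2).card ≤ m) ∧ ∃ e ∈ H.edges, (e.1 ∪ e.2).card = m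

/-- `c = corank(H)`, the minimum cardinality of an edge. -/
def corank (H : DirHypergraph n) (c : ℕ) : Prop :=
  (∀ e ∈ H.edges, c ≤ (e.1 ∪ e.2).card) ∧ ∃ e ∈ H.edges, (e.1 ∪ e.2).card = c

end DirHypergraph

variable {n : ℕ}

/-- Out-degree of a vertex. -/
def outDeg (H : DirHypergraph n) (v : Fin n) : ℕ :=
  (H.edges.filter (fun e => v ∈ e.1)).card

/-- In-degree of a vertex. -/
def inDeg (H : DirHypergraph n) (v : Fin n) : ℕ :=
  (H.edges.filter (fun e => v ∈ e.2)).card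

/-- Degree of a vertex in the underlying undirected hypergraph. -/
def undDeg (H : DirHypergraph n) (v : Fin n) : ℕ :=
  (H.edges.filter (fun e => v ∈ e.1 ∪ e.2)).card

/-- The maximum out-degree `Δ⁺`. -/
noncomputable def maxOutDeg (H : DirHypergraph n) : ℝ :=
  sSup (Set.range fun v => (outDeg H v : ℝ))

/-- The minimum out-degree `δ⁺`. -/
noncomputable def minOutDeg (H : DirHypergraph n) : ℝ :=
  sInf (Set.range fun v => (outDeg H v : ℝ))

/-- The out-adjacency hypermatrix of a directed `m`-uniform hypergraph:
the entry at the tuple `f = (i₁, …, i_m)` is `1/((m-k)!(k-1)!)` when, for some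
edge `e` with `k = |T_e|`, the first `k` indices are exactly the distinct
elements of `T_e` and the last `m - k` indices are exactly the distinct
elements of `H_e`; all other entries are zero. -/
noncomputable def outAdj (m : ℕ) (H : DirHypergraph n) (f : Fin m → Fin n) : ℝ :=
  ∑ e ∈ H.edges,
    if ((Finset.univ.filter fun j : Fin m => (j : ℕ) < e.1.card).image f = e.1 ∧
        (Finset.univ.filter fun j : Fin m => e.1.card ≤ (j : ℕ)).image f = e.2)
    then (1 : ℝ) / ((((m - e.1.card).factorial * (e.1.card - 1).factorial : ℕ)) : ℝ)
    else 0

/-- The in-adjacency hypermatrix of a directed `m`-uniform hypergraph. -/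
noncomputable def inAdj (m : ℕ) (H : DirHypergraph n) (f : Fin m → Fin n) : ℝ :=
  ∑ e ∈ H.edges,
    if ((Finset.univ.filter fun j : Fin m => (j : ℕ) < m - e.1.card).image f = e.2 ∧
        (Finset.univ.filter fun j : Fin m => m - e.1.card ≤ (j : ℕ)).image f = e.1)
    then (1 : ℝ) / ((((m - e.1.card - 1).factorial * (e.1.card).factorial : ℕ)) : ℝ)
    else 0

/-- The adjacency hypermatrix of the underlying undirected hypergraph `H_D`. -/
noncomputable def undAdj (m : ℕ) (H : DirHypergraph n) (f : Fin m → Fin n) : ℝ :=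
  ∑ e ∈ H.edges,
    if (Function.Injective f ∧ Finset.univ.image f = e.1 ∪ e.2)
    then (1 : ℝ) / (((m - 1).factorial : ℕ) : ℝ)
    else 0

/-- The supersymmetric hypermatrix `B` with `b_{i₁…i_m} = |T_e|/m!` whenever
`i₁, …, i_m` are distinct and `{i₁, …, i_m} = T_e ∪ H_e` for an edge `e`. -/
noncomputable def symB (m : ℕ) (H : DirHypergraph n) (f : Fin m → Fin n) : ℝ :=
  ∑ e ∈ H.edges,
    if (Function.Injective f ∧ Finset.univ.image f = e.1 ∪ e.2)
    then (e.1.card : ℝ) / (m.factorial : ℝ)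
    else 0

/-- The order-`m` diagonal hypermatrix with diagonal entries `d`. -/
noncomputable def diagHM (m : ℕ) (d : Fin n → ℝ) (f : Fin m → Fin n) : ℝ :=
  ∑ i : Fin n, if f = (fun _ => i) then d i else 0

/-- The normalizing constant `α` in the definition of the out-adjacency
hypermatrix of a general (non-uniform) directed hypergraph, for an edge with
tail of size `k` and `s` vertices in total, inside a rank-`m` hypergraph. -/
def alphaVal (m k s : ℕ) : ℕ :=
  ∑ r ∈ Finset.range (m - s + 1),
    (∑ t ∈ (Finset.Nat.antidiagonalTuple k (r + k)).filter (fun t => ∀ i, 1 ≤ t i),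
        Nat.multinomial Finset.univ t) *
    (∑ t ∈ (Finset.Nat.antidiagonalTuple (s - k) (m - k - r)).filter (fun t => ∀ i, 1 ≤ t i),
        Nat.multinomial Finset.univ t)

/-- The out-adjacency hypermatrix of a general directed (non-uniform)
hypergraph of rank `m`:  the entry at `f = (p₁, …, p_m)` is `k/α` when for some
edge `e` (with `|T_e| = k`, `|T_e ∪ H_e| = s`) and some `t` with
`k ≤ t ≤ m - s + k`, the first `t` indices all lie in `T_e`, covering it, and
the remaining indices all lie in `H_e`, covering it; other entries are zero. -/
noncomputable def outAdjNU (m : ℕ) (H : DirHypergraph n) (f : Fin m → Fin n) : ℝ :=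
  ∑ e ∈ H.edges,
    ∑ t ∈ Finset.Icc e.1.card (m - (e.1.card + e.2.card) + e.1.card),
      if ((Finset.univ.filter fun j : Fin m => (j : ℕ) < t).image f = e.1 ∧
          (Finset.univ.filter fun j : Fin m => t ≤ (j : ℕ)).image f = e.2)
      then (e.1.card : ℝ) / (alphaVal m e.1.card (e.1.card + e.2.card) : ℝ)
      else 0

open scoped Nat

theorem Finset.prod_comp_of_image_eq {α β M : Type*} [DecidableEq β] [CommMonoid M]
    {s : Finset α} {t : Finset β} {f : α → β} (g : β → M) (hf : s.image f = t) (hst : #s = #t) :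
    ∏ a ∈ s, g (f a) = ∏ b ∈ t, g b := by
  rw [← hf, prod_image (card_image_iff.mp (hf ▸ hst.symm))]

theorem image_filter_eq_image_univ_subtype {α β : Type*} [Fintype α] [DecidableEq β]
    (p : α → Prop) [DecidablePred p] (f : α → β) :
    ({a | p a} : Finset α).image f = univ.image fun a : {a // p a} => f a := by
  ext b; simp

section Counting

variable {α β : Type*} [Fintype α] [DecidableEq α] [Fintype β] [DecidableEq β]

theorem card_filter_image_univ_eq (A : Finset β) (h : Fintype.card α = #A) :
    #{g : α → β | univ.image g = A} = (#A)! := by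
  have hval : Function.Injective fun e : α ≃ A => Subtype.val ∘ e :=
    fun e e' he => Equiv.ext fun i => Subtype.ext (congrFun he i)
  have hrange : ({g : α → β | univ.image g = A} : Finset (α → β)) = univ.map ⟨_, hval⟩ := by
    ext g
    simp only [mem_filter, mem_univ, true_and, mem_map]
    constructor
    · intro hg
      have hinj : Function.Injective g := by
        rw [← Set.injOn_univ, ← coe_univ, ← card_image_iff, hg, card_univ, h]
      have hmem : ∀ i, g i ∈ A := fun i => hg ▸ mem_image_of_mem g (mem_univ i)
      refine ⟨Equiv.ofBijective (fun i => ⟨g i, hmem i⟩)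
        ⟨fun i j hij => hinj (congrArg Subtype.val hij), ?_⟩, rfl⟩
      rintro ⟨b, hb⟩
      obtain ⟨i, -, rfl⟩ := mem_image.mp (hg ▸ hb)
      exact ⟨i, rfl⟩
    · rintro ⟨e, rfl⟩
      ext b
      simp only [Function.Embedding.coeFn_mk, Function.comp_apply, mem_image, mem_univ, true_and]
      exact ⟨fun ⟨i, hi⟩ => hi ▸ (e i).2, fun hb => ⟨e.symm ⟨b, hb⟩, by simp⟩⟩
  rw [hrange, card_map, card_univ, Fintype.card_equiv (Fintype.equivOfCardEq (by simpa using h)), h]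

theorem card_filter_image_eq_and_image_eq (p : α → Prop) [DecidablePred p] (A B : Finset β)
    (hA : #{a | p a} = #A) (hB : #{a | ¬p a} = #B) :
    #{f : α → β | ({a | p a} : Finset α).image f = A ∧ ({a | ¬p a} : Finset α).image f = B}
      = (#A)! * (#B)! := by
  have e : {f : α → β // univ.image (fun a : {a // p a} => f a) = A ∧
        univ.image (fun a : {a // ¬p a} => f a) = B} ≃
      {g : {a // p a} → β // univ.image g = A} × {g : {a // ¬p a} → β // univ.image g = B} :=
    ((Equiv.piEquivPiSubtypeProd p fun _ => β).subtypeEquiv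
      (q := fun gh => univ.image gh.1 = A ∧ univ.image gh.2 = B) fun _ => Iff.rfl).trans
      (Equiv.subtypeProdEquivProd (p := fun g : {a // p a} → β => univ.image g = A)
        (q := fun g : {a // ¬p a} → β => univ.image g = B))
  simp only [image_filter_eq_image_univ_subtype]
  rw [← Fintype.card_subtype, Fintype.card_congr e, Fintype.card_prod, Fintype.card_subtype,
    Fintype.card_subtype, card_filter_image_univ_eq A (by rwa [Fintype.card_subtype]),
    card_filter_image_univ_eq B (by rwa [Fintype.card_subtype])]

theorem sum_ite_image_eq_and_image_eq_mul_prod (p : α → Prop) [DecidablePred p] {A B : Finset β}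
    (hAB : Disjoint A B) (hA : #{a | p a} = #A) (hB : #{a | ¬p a} = #B) (w : ℝ) (x : β → ℝ) :
    ∑ f : α → β, (if ({a | p a} : Finset α).image f = A ∧ ({a | ¬p a} : Finset α).image f = B
        then w else 0) * ∏ a, x (f a)
      = (#A)! * (#B)! * w * ∏ b ∈ A ∪ B, x b := by
  have hprod : ∀ f ∈ ({f : α → β | ({a | p a} : Finset α).image f = A ∧
      ({a | ¬p a} : Finset α).image f = B} : Finset (α → β)),
      ∏ a, x (f a) = ∏ b ∈ A ∪ B, x b := by
    intro f hf
    obtain ⟨hfA, hfB⟩ := (mem_filter.mp hf).2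
    rw [← prod_filter_mul_prod_filter_not univ p, prod_comp_of_image_eq x hfA hA,
      prod_comp_of_image_eq x hfB hB, prod_union hAB]
  simp only [ite_mul, zero_mul]
  rw [← sum_filter, sum_congr rfl fun f hf => congrArg (w * ·) (hprod f hf), sum_const,
    card_filter_image_eq_and_image_eq p A B hA hB, nsmul_eq_mul]
  push_cast
  ring

end Counting

theorem formEval_add {m n : ℕ} (A B : (Fin m → Fin n) → ℝ) (x : Fin n → ℝ) :
    formEval (fun f => A f + B f) x = formEval A x + formEval B x := by
  simp only [formEval, add_mul, sum_add_distrib]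

theorem formEval_sub {m n : ℕ} (A B : (Fin m → Fin n) → ℝ) (x : Fin n → ℝ) :
    formEval (fun f => A f - B f) x = formEval A x - formEval B x := by
  simp only [formEval, sub_mul, sum_sub_distrib]

theorem formEval_diagHM {m n : ℕ} (d x : Fin n → ℝ) :
    formEval (diagHM m d) x = ∑ i, d i * x i ^ m := by
  simp only [formEval, diagHM, sum_mul, ite_mul, zero_mul]
  rw [sum_comm]
  refine sum_congr rfl fun i _ => ?_
  simp

theorem sum_card_filter_mem_mul {ι κ : Type*} [Fintype ι] [DecidableEq ι] (s : Finset κ)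
    (t : κ → Finset ι) (g : ι → ℝ) :
    ∑ i, (#{e ∈ s | i ∈ t e} : ℝ) * g i = ∑ e ∈ s, ∑ i ∈ t e, g i := by
  simp only [card_filter, Nat.cast_sum, Nat.cast_ite, Nat.cast_one, Nat.cast_zero, sum_mul,
    ite_mul, one_mul, zero_mul]
  rw [sum_comm]
  simp [sum_ite_mem]

theorem DirHypergraph.IsUniform.card_add_card {m : ℕ} {H : DirHypergraph n} (hH : H.IsUniform m)
    {e : Finset (Fin n) × Finset (Fin n)} (he : e ∈ H.edges) : #e.1 + #e.2 = m := by
  rw [← card_union_of_disjoint (H.tail_head_disjoint e he), hH e he]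

theorem card_filter_not_val_lt {m k : ℕ} (hk : k ≤ m) : #{j : Fin m | ¬(j : ℕ) < k} = m - k := by
  rw [filter_not, card_sdiff_of_subset (filter_subset _ _), Fin.card_filter_val_lt, card_univ,
    Fintype.card_fin, min_eq_right hk]

theorem formEval_outAdj {m : ℕ} {H : DirHypergraph n} (hH : H.IsUniform m) (x : Fin n → ℝ) :
    formEval (outAdj m H) x = ∑ e ∈ H.edges, (#e.1 : ℝ) * ∏ v ∈ e.1 ∪ e.2, x v := by
  simp only [formEval, outAdj, sum_mul]
  rw [sum_comm]
  refine sum_congr rfl fun e he => ?_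
  have hm := hH.card_add_card he
  have hk : #e.1 ≠ 0 := (card_pos.mpr (H.tail_nonempty e he)).ne'
  simp only [← not_lt]
  rw [sum_ite_image_eq_and_image_eq_mul_prod (fun j : Fin m => (j : ℕ) < #e.1)
    (H.tail_head_disjoint e he) (by rw [Fin.card_filter_val_lt]; omega)
    (by rw [card_filter_not_val_lt (by omega)]; omega),
    show m - #e.1 = #e.2 by omega, ← Nat.mul_factorial_pred hk]
  push_cast
  field_simp

theorem formEval_inAdj {m : ℕ} {H : DirHypergraph n} (hH : H.IsUniform m) (x : Fin n → ℝ) :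
    formEval (inAdj m H) x = ∑ e ∈ H.edges, (#e.2 : ℝ) * ∏ v ∈ e.1 ∪ e.2, x v := by
  simp only [formEval, inAdj, sum_mul]
  rw [sum_comm]
  refine sum_congr rfl fun e he => ?_
  have hm := hH.card_add_card he
  have hk : #e.2 ≠ 0 := (card_pos.mpr (H.head_nonempty e he)).ne'
  simp only [← not_lt]
  rw [sum_ite_image_eq_and_image_eq_mul_prod (fun j : Fin m => (j : ℕ) < m - #e.1)
    (H.tail_head_disjoint e he).symm (by rw [Fin.card_filter_val_lt]; omega)
    (by rw [card_filter_not_val_lt (by omega)]; omega),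
    show m - #e.1 = #e.2 by omega, ← Nat.mul_factorial_pred hk, union_comm]
  push_cast
  field_simp

theorem Real.card_mul_prod_le_sum_pow_card {ι : Type*} (s : Finset ι) {x : ι → ℝ}
    (hx : ∀ i ∈ s, 0 ≤ x i) : #s * ∏ i ∈ s, x i ≤ ∑ i ∈ s, x i ^ #s := by
  rcases s.eq_empty_or_nonempty with rfl | hs
  · simp
  have hcard : (#s : ℝ) ≠ 0 := by exact_mod_cast hs.card_pos.ne'
  have amgm := Real.geom_mean_le_arith_mean_weighted s (fun _ => (#s : ℝ)⁻¹) (fun i => x i ^ #s)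
    (fun _ _ => by positivity) (by simp [hcard]) fun i hi => pow_nonneg (hx i hi) _
  rw [prod_congr rfl fun i hi => Real.pow_rpow_inv_natCast (hx i hi) hs.card_pos.ne', ← mul_sum]
    at amgm
  calc (#s : ℝ) * ∏ i ∈ s, x i ≤ #s * ((#s : ℝ)⁻¹ * ∑ i ∈ s, x i ^ #s) := by gcongr
    _ = ∑ i ∈ s, x i ^ #s := by field_simp

theorem formEval_laplacian {m : ℕ} {H : DirHypergraph n} (hH : H.IsUniform m) (x : Fin n → ℝ) :
    formEval (fun f => (diagHM m (fun v => (outDeg H v : ℝ)) f - outAdj m H f) +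
      (diagHM m (fun v => (inDeg H v : ℝ)) f - inAdj m H f)) x
      = ∑ e ∈ H.edges, (∑ v ∈ e.1 ∪ e.2, x v ^ m - m * ∏ v ∈ e.1 ∪ e.2, x v) := by
  rw [formEval_add, formEval_sub, formEval_sub, formEval_diagHM, formEval_diagHM]
  simp only [outDeg, inDeg, sum_card_filter_mem_mul, formEval_outAdj hH, formEval_inAdj hH,
    ← sum_sub_distrib, ← sum_add_distrib]
  refine sum_congr rfl fun e he => ?_
  rw [sum_union (H.tail_head_disjoint e he), ← hH.card_add_card he]
  push_cast
  ring

/-- For a directed `m`-uniform hypergraph `H`, the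
Laplacian hypermatrix `L_H = L_H⁺ + L_H⁻` is copositive. -/
theorem laplacian_copositive {m n : ℕ} (H : DirHypergraph n) (hH : H.IsUniform m) :
    Copositive (fun f => (diagHM m (fun v => (outDeg H v : ℝ)) f - outAdj m H f) +
      (diagHM m (fun v => (inDeg H v : ℝ)) f - inAdj m H f)) := by
  intro x hx
  rw [formEval_laplacian hH]
  refine sum_nonneg fun e he => sub_nonneg.mpr ?_
  simpa only [hH e he] using Real.card_mul_prod_le_sum_pow_card (e.1 ∪ e.2) fun v _ => hx v
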